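/- arXiv:2601.09357 — 4 statements merged into one kernel-verified Lean document; each statement's English description precedes it below -/
import Mathlib

section
/- Katriel's normal-ordering formula: for every natural number n ≥ 1, the n-th power of the linear operator p ↦ X·(d/dX)p on the polynomial ring ℚ[X] equals the sum over k = 1,…,n of S(n,k) times the operator p ↦ X^k·(d/dX)^k p, where S(n,k) denotes the Stirling number of the second kind, i.e. the number of set partitions of {1,…,n} into exactly k blocks. -/
/-! Both sides are linear in `p`, and the monomials are eigenvectors of every operator involved:
`(X d/dX)ⁿ Xᵐ = mⁿ Xᵐ` and `Xᵏ (d/dX)ᵏ Xᵐ = m(m-1)⋯(m-k+1) Xᵐ`. So the formula reduces to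
`mⁿ = ∑ₖ S(n,k) m(m-1)⋯(m-k+1)`, which comes from sorting the maps `Fin n → Fin m` by the partition
into their nonempty fibres: the maps whose fibres are the blocks of `π` are the injections of the
blocks of `π` into `Fin m`. -/

/-- A set partition of `{1,…,n}` (modelled as `Fin n`): a collection of pairwise
disjoint nonempty blocks whose union is everything. -/
def IsSetPartition (n : ℕ) (π : Finset (Finset (Fin n))) : Prop :=
  (∀ B ∈ π, B.Nonempty) ∧
  (∀ B ∈ π, ∀ C ∈ π, B ≠ C → B ∩ C = ∅) ∧
  π.sup id = Finset.univ

open scoped Classical in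
/-- The set of all set partitions of `{1,…,n}`. -/
noncomputable def setPartitions (n : ℕ) : Finset (Finset (Finset (Fin n))) :=
  Finset.univ.filter (IsSetPartition n)

open scoped Classical in
/-- The Stirling number of the second kind: the number of set partitions of
`{1,…,n}` into exactly `k` blocks. -/
noncomputable def stirling2 (n k : ℕ) : ℕ :=
  ((setPartitions n).filter (fun π => π.card = k)).card

open Finset Polynomial

namespace IsSetPartition

variable {n : ℕ} {π : Finset (Finset (Fin n))}

theorem existsUnique_mem (hπ : IsSetPartition n π) (i : Fin n) : ∃! B, B ∈ π ∧ i ∈ B := by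
  obtain ⟨B, hB, hiB⟩ := mem_sup.1 (hπ.2.2 ▸ mem_univ i : i ∈ π.sup id)
  refine ⟨B, ⟨hB, hiB⟩, fun C ⟨hC, hiC⟩ => by_contra fun hne => ?_⟩
  simpa [hπ.2.1 C hC B hB hne] using mem_inter.2 ⟨hiC, hiB⟩

noncomputable def block (hπ : IsSetPartition n π) (i : Fin n) : Finset (Fin n) :=
  π.choose (i ∈ ·) (hπ.existsUnique_mem i)

variable (hπ : IsSetPartition n π)

theorem block_mem (i : Fin n) : hπ.block i ∈ π := choose_mem _ _ _

theorem mem_block (i : Fin n) : i ∈ hπ.block i := choose_property (i ∈ ·) _ _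

theorem block_eq_of_mem {B : Finset (Fin n)} {i : Fin n} (hB : B ∈ π) (hi : i ∈ B) :
    hπ.block i = B :=
  (hπ.existsUnique_mem i).unique ⟨hπ.block_mem i, hπ.mem_block i⟩ ⟨hB, hi⟩

theorem block_eq_block_iff {i j : Fin n} : hπ.block j = hπ.block i ↔ j ∈ hπ.block i :=
  ⟨fun h => h ▸ hπ.mem_block j, hπ.block_eq_of_mem (hπ.block_mem i)⟩

theorem image_block : univ.image hπ.block = π := by
  refine (image_subset_iff.2 fun i _ => hπ.block_mem i).antisymm fun B hB => ?_
  obtain ⟨i, hi⟩ := hπ.1 B hB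
  exact mem_image.2 ⟨i, mem_univ i, hπ.block_eq_of_mem hB hi⟩

theorem card_le (hπ : IsSetPartition n π) : #π ≤ n := by
  simpa [hπ.image_block] using card_image_le (s := univ) (f := hπ.block)

theorem card_pos (hπ : IsSetPartition n π) (hn : 0 < n) : 0 < #π :=
  Finset.card_pos.2 ⟨_, hπ.block_mem ⟨0, hn⟩⟩

end IsSetPartition

theorem mem_setPartitions {n : ℕ} {π : Finset (Finset (Fin n))} :
    π ∈ setPartitions n ↔ IsSetPartition n π := by
  simp [setPartitions]

section FiberPartition

variable {n m : ℕ}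

noncomputable def fiberPartition (f : Fin n → Fin m) : Finset (Finset (Fin n)) :=
  univ.image fun i => univ.filter (f · = f i)

theorem isSetPartition_fiberPartition (f : Fin n → Fin m) :
    IsSetPartition n (fiberPartition f) := by
  refine ⟨?_, ?_, ?_⟩
  · rintro _ hB
    obtain ⟨i, -, rfl⟩ := mem_image.1 hB
    exact ⟨i, by simp⟩
  · rintro _ hB _ hC hne
    obtain ⟨i, -, rfl⟩ := mem_image.1 hB
    obtain ⟨j, -, rfl⟩ := mem_image.1 hC
    refine eq_empty_of_forall_notMem fun x hx => hne ?_
    simp only [mem_inter, mem_filter, mem_univ, true_and] at hx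
    ext y
    simp [← hx.1, ← hx.2]
  · refine eq_univ_of_forall fun i => mem_sup.2 ⟨_, mem_image_of_mem _ (mem_univ i), by simp⟩

namespace IsSetPartition

variable {π : Finset (Finset (Fin n))} (hπ : IsSetPartition n π)

theorem fiberPartition_eq_iff {f : Fin n → Fin m} :
    fiberPartition f = π ↔ ∀ i j, f j = f i ↔ j ∈ hπ.block i := by
  constructor
  · rintro rfl i j
    have hfib : hπ.block i = univ.filter (f · = f i) :=
      hπ.block_eq_of_mem (mem_image_of_mem _ (mem_univ i)) (by simp)
    simp [hfib]
  · intro h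
    rw [← hπ.image_block, fiberPartition]
    congr 1
    ext i j
    simp [h]

noncomputable def lift (g : π ↪ Fin m) (i : Fin n) : Fin m :=
  g ⟨hπ.block i, hπ.block_mem i⟩

theorem lift_injective : Function.Injective (hπ.lift (m := m)) := by
  intro g g' h
  ext ⟨B, hB⟩
  obtain ⟨i, hi⟩ := hπ.1 B hB
  have := congrFun h i
  simp only [lift, hπ.block_eq_of_mem hB hi] at this
  exact congrArg _ this

theorem fiberPartition_lift (g : π ↪ Fin m) : fiberPartition (hπ.lift g) = π := by
  refine (hπ.fiberPartition_eq_iff).2 fun i j => ?_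
  simp [lift, Subtype.ext_iff, hπ.block_eq_block_iff]

theorem exists_lift_eq {f : Fin n → Fin m} (hf : fiberPartition f = π) :
    ∃ g : π ↪ Fin m, hπ.lift g = f := by
  have hfib := (hπ.fiberPartition_eq_iff).1 hf
  have const : ∀ i j, j ∈ hπ.block i → f j = f i := fun i j => (hfib i j).2
  let rep : π → Fin n := fun B => (hπ.1 B.1 B.2).choose
  have rep_mem : ∀ B : π, rep B ∈ B.1 := fun B => (hπ.1 B.1 B.2).choose_spec
  have block_rep : ∀ B : π, hπ.block (rep B) = B.1 := fun B => hπ.block_eq_of_mem B.2 (rep_mem B)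
  refine ⟨⟨fun B => f (rep B), fun B C h => Subtype.ext ?_⟩, funext fun i => ?_⟩
  · rw [← block_rep B, ← block_rep C, hπ.block_eq_block_iff, ← hfib]
    exact h
  · refine const i _ ?_
    simpa [block_rep] using rep_mem ⟨hπ.block i, hπ.block_mem i⟩

theorem card_filter_fiberPartition_eq (hπ : IsSetPartition n π) :
    #(univ.filter fun f : Fin n → Fin m => fiberPartition f = π) = m.descFactorial #π := by
  have : univ.filter (fun f : Fin n → Fin m => fiberPartition f = π) = univ.image hπ.lift := by
    ext f
    simp only [mem_filter, mem_univ, true_and, mem_image]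
    exact ⟨hπ.exists_lift_eq, fun ⟨g, hg⟩ => hg ▸ hπ.fiberPartition_lift g⟩
  rw [this, card_image_of_injective _ hπ.lift_injective, card_univ, Fintype.card_embedding_eq,
    Fintype.card_fin, Fintype.card_coe]

end IsSetPartition

end FiberPartition

theorem pow_eq_sum_setPartitions_descFactorial (n m : ℕ) :
    m ^ n = ∑ π ∈ setPartitions n, m.descFactorial #π := by
  calc m ^ n = #(univ : Finset (Fin n → Fin m)) := by simp
    _ = ∑ π ∈ setPartitions n, #(univ.filter fun f : Fin n → Fin m => fiberPartition f = π) :=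
      card_eq_sum_card_fiberwise fun f _ =>
        mem_setPartitions.2 (isSetPartition_fiberPartition f)
    _ = _ := sum_congr rfl fun π hπ => (mem_setPartitions.1 hπ).card_filter_fiberPartition_eq

theorem pow_eq_sum_stirling2_mul_descFactorial {n : ℕ} (hn : 1 ≤ n) (m : ℕ) :
    m ^ n = ∑ k ∈ Icc 1 n, stirling2 n k * m.descFactorial k := by
  have card_mem : ∀ π ∈ setPartitions n, #π ∈ Icc 1 n := fun π hπ =>
    mem_Icc.2 ⟨(mem_setPartitions.1 hπ).card_pos hn, (mem_setPartitions.1 hπ).card_le⟩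
  rw [pow_eq_sum_setPartitions_descFactorial, ← sum_fiberwise_of_maps_to card_mem]
  refine sum_congr rfl fun k _ => ?_
  rw [sum_congr rfl fun π hπ => by rw [(mem_filter.1 hπ).2], sum_const, smul_eq_mul, stirling2]

namespace Polynomial

variable (R : Type*) [CommSemiring R]

noncomputable def eulerOperator : Module.End R R[X] :=
  LinearMap.mulLeft R X ∘ₗ derivative

variable {R}

theorem eulerOperator_X_pow (m : ℕ) : eulerOperator R (X ^ m) = (m : R) • X ^ m := by
  cases m with
  | zero => simp [eulerOperator]
  | succ m =>
    simp only [eulerOperator, LinearMap.comp_apply, LinearMap.mulLeft_apply, derivative_X_pow,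
      Nat.add_sub_cancel, smul_eq_C_mul]
    ring

theorem eulerOperator_pow_X_pow (n m : ℕ) :
    (eulerOperator R ^ n) (X ^ m) = ((m : R) ^ n) • X ^ m := by
  induction n with
  | zero => simp
  | succ n ih =>
    rw [pow_succ', Module.End.mul_apply, ih, map_smul, eulerOperator_X_pow, smul_smul, pow_succ]

theorem X_pow_mul_iterate_derivative_X_pow (k m : ℕ) :
    X ^ k * derivative^[k] (X ^ m : R[X]) = (m.descFactorial k : R) • X ^ m := by
  rw [iterate_derivative_X_pow_eq_smul, mul_smul_comm]
  rcases le_or_gt k m with h | h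
  · rw [← pow_add, Nat.add_sub_cancel' h]
  · simp [Nat.descFactorial_eq_zero_iff_lt.2 h]

theorem eulerOperator_pow_eq_sum {n : ℕ} (hn : 1 ≤ n) :
    eulerOperator R ^ n =
      ∑ k ∈ Icc 1 n, (stirling2 n k : R) • (LinearMap.mulLeft R (X ^ k) ∘ₗ derivative ^ k) := by
  refine lhom_ext' fun m => LinearMap.ext_ring ?_
  rw [LinearMap.comp_apply, LinearMap.comp_apply, monomial_one_right_eq_X_pow,
    eulerOperator_pow_X_pow, LinearMap.sum_apply]
  simp_rw [LinearMap.smul_apply, LinearMap.comp_apply, LinearMap.mulLeft_apply,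
    Module.End.pow_apply, X_pow_mul_iterate_derivative_X_pow, smul_smul, ← Finset.sum_smul]
  exact_mod_cast congrArg (· • (X ^ m : R[X])) (pow_eq_sum_stirling2_mul_descFactorial hn m)

end Polynomial

/-- Katriel's normal-ordering formula. -/
theorem katriel (n : ℕ) (hn : 1 ≤ n) (p : Polynomial ℚ) :
    (fun q : Polynomial ℚ => Polynomial.X * Polynomial.derivative q)^[n] p =
      ∑ k ∈ Finset.Icc 1 n,
        (stirling2 n k : ℚ) •
          (Polynomial.X ^ k * (fun q : Polynomial ℚ => Polynomial.derivative q)^[k] p) := by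
  have h := LinearMap.congr_fun (eulerOperator_pow_eq_sum (R := ℚ) hn) p
  simp only [Module.End.pow_apply, LinearMap.sum_apply, LinearMap.smul_apply,
    LinearMap.comp_apply, LinearMap.mulLeft_apply] at h
  exact h
end

section
/- Exponential formula (combinatorial form of Corollary on β-series): let a : ℕ → ℚ be any sequence. For n ≥ 0 define β_n = Σ_π Π_{B ∈ π} a(|B|), where the sum ranges over all set partitions π of {1,…,n} and the product over the blocks B of π (so β_0 = 1, from the empty partition). Then in the formal power series ring ℚ[[X]] one has Σ_{n≥0} β_n X^n/n! = exp( Σ_{n≥1} a(n) X^n/n! ), where exp is applied to a power series with zero constant term. -/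
/-- The exponential `Σ_{k≥0} F^k / k!` of a power series `F` with zero constant
term, computed coefficientwise (when the constant term of `F` is zero, the
coefficient of `X^n` in `F^k` vanishes for `k > n`). -/
noncomputable def expComp (F : PowerSeries ℚ) : PowerSeries ℚ :=
  PowerSeries.mk fun n => ∑ k ∈ Finset.range (n + 1),
    (k.factorial : ℚ)⁻¹ * PowerSeries.coeff (R := ℚ) n (F ^ k)

/-- `β_n = Σ_π Π_{B ∈ π} a(|B|)`, summed over all set partitions of `{1,…,n}`. -/
noncomputable def beta (a : ℕ → ℚ) (n : ℕ) : ℚ :=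
  ∑ π ∈ setPartitions n, ∏ B ∈ π, a B.card

open Finset PowerSeries
open scoped Nat

section Partitions

variable {α R : Type*} [DecidableEq α]

def IsPartitionOf (s : Finset α) (π : Finset (Finset α)) : Prop :=
  (∀ B ∈ π, B.Nonempty) ∧ (∀ B ∈ π, ∀ C ∈ π, B ≠ C → B ∩ C = ∅) ∧ π.sup id = s

namespace IsPartitionOf

variable {s t B C : Finset α} {π σ : Finset (Finset α)} {x : α}

theorem subset (h : IsPartitionOf s π) (hB : B ∈ π) : B ⊆ s :=
  h.2.2 ▸ le_sup (f := id) hB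

theorem eq_of_mem_of_mem (h : IsPartitionOf s π) (hB : B ∈ π) (hC : C ∈ π) (hxB : x ∈ B)
    (hxC : x ∈ C) : B = C := by
  by_contra hne
  simpa [h.2.1 B hB C hC hne] using mem_inter.mpr ⟨hxB, hxC⟩

theorem exists_mem (h : IsPartitionOf s π) (hx : x ∈ s) : ∃ B ∈ π, x ∈ B := by
  rw [← h.2.2] at hx
  simpa using mem_sup.mp hx

theorem erase (h : IsPartitionOf s π) (hB : B ∈ π) : IsPartitionOf (s \ B) (π.erase B) := by
  refine ⟨fun C hC => h.1 C (mem_of_mem_erase hC),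
    fun C hC D hD => h.2.1 C (mem_of_mem_erase hC) D (mem_of_mem_erase hD), ?_⟩
  ext y
  simp only [mem_sup, mem_erase, id_eq, mem_sdiff]
  constructor
  · rintro ⟨C, ⟨hCB, hC⟩, hyC⟩
    exact ⟨h.subset hC hyC, fun hyB => hCB (h.eq_of_mem_of_mem hC hB hyC hyB)⟩
  · rintro ⟨hys, hyB⟩
    obtain ⟨C, hC, hyC⟩ := h.exists_mem hys
    exact ⟨C, ⟨fun hCB => hyB (hCB ▸ hyC), hC⟩, hyC⟩

theorem insert (h : IsPartitionOf t σ) (hB : B.Nonempty) (hBt : Disjoint B t) :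
    IsPartitionOf (B ∪ t) (insert B σ) := by
  have hdisj : ∀ C ∈ σ, B ∩ C = ∅ := fun C hC =>
    disjoint_iff_inter_eq_empty.mp (hBt.mono_right (h.subset hC))
  refine ⟨forall_mem_insert _ _ _ |>.mpr ⟨hB, h.1⟩, ?_, by rw [sup_insert, h.2.2]; rfl⟩
  intro C hC D hD hCD
  rcases mem_insert.mp hC with rfl | hCσ <;> rcases mem_insert.mp hD with rfl | hDσ
  · exact absurd rfl hCD
  · exact hdisj D hDσ
  · rw [inter_comm]; exact hdisj C hCσ
  · exact h.2.1 C hCσ D hDσ hCD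

theorem filter_notMem_eq_erase (h : IsPartitionOf s π) (hB : B ∈ π) (hx : x ∈ B) :
    π.filter (x ∉ ·) = π.erase B := by
  ext C
  simp only [mem_filter, mem_erase]
  exact ⟨fun ⟨hC, hxC⟩ => ⟨fun hCB => hxC (hCB ▸ hx), hC⟩,
    fun ⟨hCB, hC⟩ => ⟨hC, fun hxC => hCB (h.eq_of_mem_of_mem hC hB hxC hx)⟩⟩

theorem insert_sdiff (h : IsPartitionOf t σ) (hts : t ⊆ s) (hx : x ∈ s) (hxt : x ∉ t) :
    IsPartitionOf s (Insert.insert (s \ t) σ) := by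
  simpa [sdiff_union_of_subset hts] using h.insert ⟨x, mem_sdiff.mpr ⟨hx, hxt⟩⟩ sdiff_disjoint

theorem filter_notMem_insert_sdiff (h : IsPartitionOf t σ) (hx : x ∈ s) (hxt : x ∉ t) :
    (Insert.insert (s \ t) σ).filter (x ∉ ·) = σ := by
  rw [filter_insert, if_neg (not_not.mpr (mem_sdiff.mpr ⟨hx, hxt⟩))]
  exact filter_true_of_mem fun C hC hxC => hxt (h.subset hC hxC)

end IsPartitionOf

theorem isPartitionOf_empty_iff {π : Finset (Finset α)} : IsPartitionOf ∅ π ↔ π = ∅ := by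
  refine ⟨fun h => eq_empty_of_forall_notMem fun B hB => ?_, by rintro rfl; simp [IsPartitionOf]⟩
  obtain ⟨y, hy⟩ := h.1 B hB
  simpa using h.subset hB hy

open scoped Classical in
noncomputable def partitions (s : Finset α) : Finset (Finset (Finset α)) :=
  s.powerset.powerset.filter (IsPartitionOf s)

theorem mem_partitions {s : Finset α} {π : Finset (Finset α)} :
    π ∈ partitions s ↔ IsPartitionOf s π := by
  simp only [partitions, mem_filter, mem_powerset, and_iff_right_iff_imp]
  exact fun h B hB => mem_powerset.mpr (h.subset hB)

variable [CommSemiring R]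

noncomputable def partitionWeight (a : ℕ → R) (s : Finset α) : R :=
  ∑ π ∈ partitions s, ∏ B ∈ π, a #B

theorem partitionWeight_empty (a : ℕ → R) : partitionWeight a (∅ : Finset α) = 1 := by
  have : partitions (∅ : Finset α) = {∅} := by
    ext π; rw [mem_partitions, isPartitionOf_empty_iff, mem_singleton]
  simp [partitionWeight, this]

theorem partitionWeight_eq_sum_powerset (a : ℕ → R) {s : Finset α} {x : α} (hx : x ∈ s) :
    partitionWeight a s = ∑ U ∈ (s.erase x).powerset, a #(s \ U) * partitionWeight a U := by
  have block_of_mem : ∀ {π}, π ∈ partitions s → IsPartitionOf s π ∧ ∃ B ∈ π, x ∈ B ∧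
      π.filter (x ∉ ·) = π.erase B ∧ (π.erase B).sup id = s \ B := fun hπ => by
    have h := mem_partitions.mp hπ
    obtain ⟨B, hB, hxB⟩ := h.exists_mem hx
    exact ⟨h, B, hB, hxB, h.filter_notMem_eq_erase hB hxB, (h.erase hB).2.2⟩
  have rest_of_mem : ∀ {p : Σ _ : Finset α, Finset (Finset α)},
      p ∈ (s.erase x).powerset.sigma partitions → (p.1 ⊆ s ∧ x ∉ p.1) ∧ IsPartitionOf p.1 p.2 :=
    fun hp => by simpa only [mem_sigma, mem_powerset, subset_erase, mem_partitions] using hp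
  simp only [partitionWeight, mul_sum]
  rw [sum_sigma']
  refine sum_nbij' (fun π => ⟨(π.filter (x ∉ ·)).sup id, π.filter (x ∉ ·)⟩)
    (fun p => insert (s \ p.1) p.2) ?_ ?_ ?_ ?_ ?_
  · intro π hπ
    obtain ⟨h, B, hB, hxB, hfilter, hsup⟩ := block_of_mem hπ
    simp only [mem_sigma, mem_powerset, subset_erase, hfilter, hsup, mem_partitions]
    exact ⟨⟨sdiff_subset, fun hx' => (mem_sdiff.mp hx').2 hxB⟩, h.erase hB⟩
  · rintro ⟨U, σ⟩ hp
    obtain ⟨⟨hUs, hxU⟩, hσ⟩ := rest_of_mem hp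
    exact mem_partitions.mpr (hσ.insert_sdiff hUs hx hxU)
  · intro π hπ
    obtain ⟨h, B, hB, hxB, hfilter, hsup⟩ := block_of_mem hπ
    simp only [hfilter, hsup, Finset.sdiff_sdiff_eq_self (h.subset hB), insert_erase hB]
  · rintro ⟨U, σ⟩ hp
    obtain ⟨⟨-, hxU⟩, hσ⟩ := rest_of_mem hp
    simp only [hσ.filter_notMem_insert_sdiff hx hxU, hσ.2.2]
  · intro π hπ
    obtain ⟨h, B, hB, hxB, hfilter, hsup⟩ := block_of_mem hπ
    simp only [hfilter, hsup, Finset.sdiff_sdiff_eq_self (h.subset hB), ← mul_prod_erase π _ hB]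

-- Summing over `Fin (n + 1)` rather than `range (n + 1)` lets Lean see that `k < n + 1`.
def weightedBell (a : ℕ → R) : ℕ → R
  | 0 => 1
  | n + 1 => ∑ k : Fin (n + 1), n.choose k * weightedBell a k * a (n - k + 1)

theorem weightedBell_succ (a : ℕ → R) (n : ℕ) :
    weightedBell a (n + 1) =
      ∑ k ∈ range (n + 1), n.choose k * weightedBell a k * a (n - k + 1) := by
  rw [weightedBell]
  exact Fin.sum_univ_eq_sum_range (fun k => n.choose k * weightedBell a k * a (n - k + 1)) (n + 1)

theorem partitionWeight_eq_weightedBell (a : ℕ → R) (s : Finset α) :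
    partitionWeight a s = weightedBell a #s := by
  induction s using Finset.strongInduction with
  | _ s ih =>
    obtain rfl | ⟨x, hx⟩ := s.eq_empty_or_nonempty
    · rw [partitionWeight_empty, card_empty, weightedBell]
    have hcard : #s = #(s.erase x) + 1 := (card_erase_add_one hx).symm
    have hrest : ∀ U ∈ (s.erase x).powerset,
        a #(s \ U) * partitionWeight a U = weightedBell a #U * a (#(s.erase x) - #U + 1) := by
      intro U hU
      have hUs : U ⊆ s.erase x := mem_powerset.mp hU
      rw [ih U (hUs.trans_ssubset (erase_ssubset hx)),
        card_sdiff_of_subset (hUs.trans (erase_subset x s)), mul_comm]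
      congr 2
      have := card_le_card hUs
      omega
    rw [partitionWeight_eq_sum_powerset a hx, sum_congr rfl hrest, sum_powerset_apply_card
      (fun k => weightedBell a k * a (#(s.erase x) - k + 1)), hcard, weightedBell_succ]
    simp only [nsmul_eq_mul, mul_assoc]

end Partitions

namespace PowerSeries

theorem coeff_pow_eq_zero_of_lt {R : Type*} [CommSemiring R] {F : R⟦X⟧}
    (hF : constantCoeff F = 0) {n k : ℕ} (h : n < k) : coeff n (F ^ k) = 0 :=
  X_pow_dvd_iff.mp (pow_dvd_pow_of_dvd (X_dvd_iff.mpr hF) k) n h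

theorem eq_of_derivative_eq_mul_self {R : Type*} [CommRing R] [IsAddTorsionFree R]
    {G E D : R⟦X⟧} (hG : d⁄dX R G = G * D) (hE : d⁄dX R E = E * D) (hEu : IsUnit E)
    (h0 : constantCoeff G = constantCoeff E) : G = E := by
  obtain ⟨u, rfl⟩ := hEu
  have hderiv : d⁄dX R (G * ↑u⁻¹) = d⁄dX R 1 := by
    rw [Derivation.leibniz, derivative_inv, hG, hE, derivative_one]
    linear_combination (-(G * D) * ↑u⁻¹) * u.mul_inv
  have hconst : constantCoeff (G * (↑u⁻¹ : R⟦X⟧)) = constantCoeff 1 := by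
    rw [map_mul, h0, ← map_mul, u.mul_inv]
  calc G = G * ↑u⁻¹ * ↑u := by rw [mul_assoc, u.inv_mul, mul_one]
    _ = ↑u := by rw [derivative.ext hderiv hconst, one_mul]

end PowerSeries

theorem expComp_eq_subst {F : ℚ⟦X⟧} (hF : constantCoeff F = 0) :
    expComp F = (exp ℚ).subst F := by
  ext n
  rw [expComp, coeff_mk, coeff_subst' (.of_constantCoeff_zero' hF),
    finsum_eq_sum_of_support_subset _ (s := Finset.range (n + 1)) ?_]
  · simp [coeff_exp]
  · intro k hk
    simp only [Function.mem_support, Finset.coe_range, Set.mem_Iio] at hk ⊢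
    by_contra h
    exact hk (by rw [coeff_pow_eq_zero_of_lt hF (by omega), smul_zero])

theorem derivative_expComp {F : ℚ⟦X⟧} (hF : constantCoeff F = 0) :
    d⁄dX ℚ (expComp F) = expComp F * d⁄dX ℚ F := by
  rw [expComp_eq_subst hF, derivative_subst (.of_constantCoeff_zero' hF), derivative_exp]

theorem constantCoeff_expComp (F : ℚ⟦X⟧) : constantCoeff (expComp F) = 1 := by
  simp [expComp]

theorem derivative_mk_weightedBell {K : Type*} [Field K] [CharZero K] (a : ℕ → K) :
    d⁄dX K (mk fun n => weightedBell a n / n !) =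
      (mk fun n => weightedBell a n / n !) *
        d⁄dX K (mk fun n => if n = 0 then 0 else a n / n !) := by
  ext n
  rw [coeff_derivative, coeff_mul, Nat.sum_antidiagonal_eq_sum_range_succ_mk, coeff_mk,
    weightedBell_succ, sum_div, sum_mul]
  refine sum_congr rfl fun k hk => ?_
  have hkn : k ≤ n := Nat.lt_succ_iff.mp (mem_range.mp hk)
  simp only [coeff_derivative, coeff_mk, if_neg (Nat.succ_ne_zero _), Nat.cast_choose K hkn,
    Nat.factorial_succ]
  have : ((n - k : ℕ) : K) + 1 ≠ 0 := Nat.cast_add_one_ne_zero _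
  have : (n ! : K) ≠ 0 := Nat.cast_ne_zero.mpr (Nat.factorial_ne_zero n)
  push_cast
  field_simp

theorem beta_eq_weightedBell (a : ℕ → ℚ) (n : ℕ) : beta a n = weightedBell a n := by
  have : setPartitions n = partitions univ := by
    ext π
    simp only [mem_partitions, setPartitions, mem_filter, mem_univ, true_and]
    rfl
  rw [beta, this, ← partitionWeight, partitionWeight_eq_weightedBell, card_univ, Fintype.card_fin]

/-- The exponential formula: `Σ_{n≥0} β_n X^n/n! = exp(Σ_{n≥1} a(n) X^n/n!)`. -/
theorem exponential_formula (a : ℕ → ℚ) :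
    PowerSeries.mk (fun n => beta a n / n.factorial) =
      expComp (PowerSeries.mk fun n => if n = 0 then 0 else a n / n.factorial) := by
  have hF : constantCoeff (mk fun n => if n = 0 then 0 else a n / n !) = 0 := by simp
  simp only [beta_eq_weightedBell]
  refine eq_of_derivative_eq_mul_self (derivative_mk_weightedBell a) (derivative_expComp hF)
    (isUnit_iff_constantCoeff.mpr ?_) ?_
  · simp [constantCoeff_expComp]
  · simp [constantCoeff_expComp, weightedBell]
end

section
/- Refined exponential formula by number of blocks: let a : ℕ → ℚ be any sequence and k ≥ 0 a fixed natural number. For n ≥ 0 define β_{n,k} = Σ_π Π_{B ∈ π} a(|B|), where the sum ranges over all set partitions π of {1,…,n} having exactly k blocks. Then in ℚ[[X]] one has Σ_{n≥0} β_{n,k} X^n/n! = (1/k!)·( Σ_{n≥1} a(n) X^n/n! )^k. -/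
open scoped Classical in
/-- `β_{n,k} = Σ_π Π_{B ∈ π} a(|B|)`, summed over all set partitions of
`{1,…,n}` having exactly `k` blocks. -/
noncomputable def betaBlocks (a : ℕ → ℚ) (n k : ℕ) : ℚ :=
  ∑ π ∈ (setPartitions n).filter (fun π => π.card = k), ∏ B ∈ π, a B.card

/-!
Work over arbitrary finite sets `s`. Removing a marked block from a partition of `s` with `k + 1`
blocks gives `(k + 1) β(s, k + 1) = ∑_{∅ ≠ t ⊆ s} a(|t|) β(s \ t, k)`. By induction on `k`, this
yields `k! β(s, k) = |s|! [X^|s|] f^k` for every `s` at once, with `f = ∑_{n ≥ 1} a(n) X^n / n!`: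
grouping the subsets `t` by size turns the recursion into the binomial convolution computing the
coefficients of `f * f^k`.
-/

open Finset PowerSeries

section Partitions

variable {α : Type*} [DecidableEq α]

def partitionsOf (s : Finset α) : Finset (Finset (Finset α)) :=
  s.powerset.powerset.filter fun π =>
    (∀ B ∈ π, B.Nonempty) ∧ (∀ B ∈ π, ∀ C ∈ π, B ≠ C → Disjoint B C) ∧ π.sup id = s

theorem mem_partitionsOf {s : Finset α} {π : Finset (Finset α)} :
    π ∈ partitionsOf s ↔
      (∀ B ∈ π, B.Nonempty) ∧ (∀ B ∈ π, ∀ C ∈ π, B ≠ C → Disjoint B C) ∧ π.sup id = s := by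
  refine mem_filter.trans ⟨And.right, fun h => ⟨?_, h⟩⟩
  exact mem_powerset.mpr fun B hB => mem_powerset.mpr (h.2.2 ▸ le_sup (f := id) hB)

theorem subset_of_mem_partitionsOf {s : Finset α} {π : Finset (Finset α)}
    (hπ : π ∈ partitionsOf s) {B : Finset α} (hB : B ∈ π) : B ⊆ s :=
  (mem_partitionsOf.mp hπ).2.2 ▸ le_sup (f := id) hB

theorem erase_mem_partitionsOf {s : Finset α} {π : Finset (Finset α)}
    (hπ : π ∈ partitionsOf s) {B : Finset α} (hB : B ∈ π) :
    π.erase B ∈ partitionsOf (s \ B) := by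
  obtain ⟨hne, hdisj, hsup⟩ := mem_partitionsOf.mp hπ
  refine mem_partitionsOf.mpr ⟨fun C hC => hne C (mem_of_mem_erase hC),
    fun C hC D hD => hdisj C (mem_of_mem_erase hC) D (mem_of_mem_erase hD), ?_⟩
  have hs : s = B ∪ (π.erase B).sup id := by
    rw [← hsup]
    conv_lhs => rw [← insert_erase hB]
    exact sup_insert
  have hB_disj : Disjoint B ((π.erase B).sup id) := Finset.disjoint_sup_right.mpr fun C hC =>
    hdisj B hB C (mem_of_mem_erase hC) (ne_of_mem_erase hC).symm
  rw [hs, union_sdiff_left, sdiff_eq_self_of_disjoint hB_disj.symm]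

theorem notMem_of_mem_partitionsOf_sdiff {s t : Finset α} (ht : t.Nonempty)
    {ρ : Finset (Finset α)} (hρ : ρ ∈ partitionsOf (s \ t)) : t ∉ ρ := fun htρ =>
  ht.ne_empty (disjoint_self.mp (subset_sdiff.mp (subset_of_mem_partitionsOf hρ htρ)).2)

theorem insert_mem_partitionsOf {s t : Finset α} (hts : t ⊆ s) (ht : t.Nonempty)
    {ρ : Finset (Finset α)} (hρ : ρ ∈ partitionsOf (s \ t)) : insert t ρ ∈ partitionsOf s := by
  obtain ⟨hne, hdisj, hsup⟩ := mem_partitionsOf.mp hρ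
  have hdisj_t : ∀ C ∈ ρ, Disjoint t C := fun C hC =>
    disjoint_sdiff.mono_right (subset_of_mem_partitionsOf hρ hC)
  refine mem_partitionsOf.mpr ⟨forall_mem_insert _ _ _ |>.mpr ⟨ht, hne⟩, ?_, ?_⟩
  · simp only [mem_insert]
    rintro B (rfl | hB) C (rfl | hC) hBC
    exacts [absurd rfl hBC, hdisj_t C hC, (hdisj_t B hB).symm, hdisj B hB C hC hBC]
  · rw [sup_insert, hsup]
    exact union_sdiff_of_subset hts

variable {R : Type*} [CommSemiring R]

def partitionSum (a : ℕ → R) (s : Finset α) (k : ℕ) : R :=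
  ∑ π ∈ (partitionsOf s).filter (·.card = k), ∏ B ∈ π, a #B

theorem partitionSum_zero (a : ℕ → R) (s : Finset α) :
    partitionSum a s 0 = if s = ∅ then 1 else 0 := by
  have h : (partitionsOf s).filter (·.card = 0) = if s = ∅ then {∅} else ∅ := by
    ext π
    rw [mem_filter, card_eq_zero]
    split_ifs with hs
    · subst hs
      simp only [mem_singleton, and_iff_right_iff_imp]
      rintro rfl
      simp [mem_partitionsOf]
    · simp only [notMem_empty, iff_false, not_and]
      rintro hπ rfl
      exact hs (mem_partitionsOf.mp hπ).2.2.symm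
  rw [partitionSum, h]
  split_ifs <;> simp

theorem succ_mul_partitionSum_succ (a : ℕ → R) (s : Finset α) (k : ℕ) :
    (k + 1) * partitionSum a s (k + 1) =
      ∑ t ∈ s.powerset.filter (·.Nonempty), a #t * partitionSum a (s \ t) k := by
  calc (k + 1) * partitionSum a s (k + 1)
      = ∑ π ∈ (partitionsOf s).filter (·.card = k + 1),
          ∑ B ∈ π, a #B * ∏ C ∈ π.erase B, a #C := by
        rw [partitionSum, mul_sum]
        refine sum_congr rfl fun π hπ => ?_
        rw [sum_congr rfl fun B hB => mul_prod_erase π (fun C => a #C) hB, sum_const,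
          (mem_filter.mp hπ).2, nsmul_eq_mul]
        push_cast
        rfl
    _ = ∑ t ∈ s.powerset.filter (·.Nonempty),
          ∑ ρ ∈ (partitionsOf (s \ t)).filter (·.card = k), a #t * ∏ C ∈ ρ, a #C := by
        rw [sum_sigma', sum_sigma']
        refine sum_nbij' (fun p => ⟨p.2, p.1.erase p.2⟩) (fun p => ⟨insert p.1 p.2, p.1⟩)
          ?_ ?_ ?_ ?_ fun _ _ => rfl
        · rintro ⟨π, B⟩ hp
          simp only [mem_sigma, mem_filter, mem_powerset] at hp ⊢
          obtain ⟨⟨hπ, hcard⟩, hB⟩ := hp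
          exact ⟨⟨subset_of_mem_partitionsOf hπ hB, (mem_partitionsOf.mp hπ).1 B hB⟩,
            erase_mem_partitionsOf hπ hB, by rw [card_erase_of_mem hB, hcard]; rfl⟩
        · rintro ⟨t, ρ⟩ hp
          simp only [mem_sigma, mem_filter, mem_powerset] at hp ⊢
          obtain ⟨⟨hts, ht⟩, hρ, hcard⟩ := hp
          exact ⟨⟨insert_mem_partitionsOf hts ht hρ, by
            rw [card_insert_of_notMem (notMem_of_mem_partitionsOf_sdiff ht hρ), hcard]⟩,
            mem_insert_self t ρ⟩
        · rintro ⟨π, B⟩ hp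
          simp only [mem_sigma] at hp
          simp only [insert_erase hp.2]
        · rintro ⟨t, ρ⟩ hp
          simp only [mem_sigma, mem_filter] at hp
          simp only [erase_insert (notMem_of_mem_partitionsOf_sdiff hp.1.2 hp.2.1)]
    _ = _ := sum_congr rfl fun t _ => (mul_sum _ _ _).symm

end Partitions

section ExponentialGeneratingFunction

open Nat

variable {K : Type*} [Field K] [CharZero K]

theorem factorial_mul_coeff_mk_div_factorial_mul (F : ℕ → K) (g : K⟦X⟧) (n : ℕ) :
    n ! * coeff n (mk (fun i => F i / i !) * g) =
      ∑ i ∈ range (n + 1), n.choose i * (F i * ((n - i)! * coeff (n - i) g)) := by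
  rw [coeff_mul, Nat.sum_antidiagonal_eq_sum_range_succ_mk, mul_sum]
  refine sum_congr rfl fun i hi => ?_
  have hchoose : (n.choose i * i ! * (n - i)! : K) = n ! := by
    exact_mod_cast choose_mul_factorial_mul_factorial (mem_range_succ_iff.mp hi)
  have hi_fact : (i ! : K) ≠ 0 := Nat.cast_ne_zero.mpr (factorial_ne_zero i)
  rw [coeff_mk, ← hchoose]
  field_simp

theorem factorial_mul_partitionSum {α : Type*} [DecidableEq α] (a : ℕ → K) (k : ℕ)
    (s : Finset α) : k ! * partitionSum a s k =
      (#s)! * coeff #s ((mk fun n => if n = 0 then 0 else a n / n !) ^ k) := by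
  set A : ℕ → K := fun n => if n = 0 then 0 else a n
  have hA : (mk fun n => if n = 0 then 0 else a n / n !) = mk fun n => A n / n ! := by
    simp only [A, ite_div, zero_div]
  rw [hA]
  induction k generalizing s with
  | zero =>
    rw [partitionSum_zero, pow_zero, coeff_one]
    rcases s.eq_empty_or_nonempty with rfl | hs
    · simp
    · simp [hs.ne_empty, hs.card_pos.ne']
  | succ k ih =>
    calc ((k + 1)! : K) * partitionSum a s (k + 1)
        = k ! * ((k + 1) * partitionSum a s (k + 1)) := by push_cast [factorial_succ]; ring
      _ = ∑ t ∈ s.powerset,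
            A #t * ((#s - #t)! * coeff (#s - #t) ((mk fun n => A n / n !) ^ k)) := by
        rw [succ_mul_partitionSum_succ, sum_filter, mul_sum]
        refine sum_congr rfl fun t ht => ?_
        rcases t.eq_empty_or_nonempty with rfl | htne
        · simp [A]
        · rw [if_pos htne, mul_left_comm, ih, card_sdiff_of_subset (mem_powerset.mp ht)]
          simp [A, htne.card_pos.ne']
      _ = (#s)! * coeff #s ((mk fun n => A n / n !) ^ (k + 1)) := by
        rw [sum_powerset_apply_card (fun j => A j * ((#s - j)! * coeff (#s - j) _)),
          _root_.pow_succ', factorial_mul_coeff_mk_div_factorial_mul]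
        simp only [nsmul_eq_mul]

end ExponentialGeneratingFunction

theorem setPartitions_eq_partitionsOf_univ (n : ℕ) : setPartitions n = partitionsOf univ := by
  ext π
  simp [setPartitions, IsSetPartition, mem_partitionsOf, disjoint_iff_inter_eq_empty]

theorem betaBlocks_eq_partitionSum (a : ℕ → ℚ) (n k : ℕ) :
    betaBlocks a n k = partitionSum a (univ : Finset (Fin n)) k := by
  rw [betaBlocks, partitionSum, setPartitions_eq_partitionsOf_univ]

/-- Refined exponential formula:
`Σ_{n≥0} β_{n,k} X^n/n! = (1/k!)·(Σ_{n≥1} a(n) X^n/n!)^k`. -/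
theorem refined_exponential_formula (a : ℕ → ℚ) (k : ℕ) :
    PowerSeries.mk (fun n => betaBlocks a n k / n.factorial) =
      (k.factorial : ℚ)⁻¹ •
        (PowerSeries.mk fun n => if n = 0 then 0 else a n / n.factorial) ^ k := by
  ext n
  have h := factorial_mul_partitionSum a k (univ : Finset (Fin n))
  rw [card_univ, Fintype.card_fin, ← betaBlocks_eq_partitionSum] at h
  rw [coeff_mk, coeff_smul, smul_eq_mul]
  field_simp
  linear_combination h
end

section
/- Unique factorization of set partitions into lists into indivisible ones (freeness of BWSym): every set partition into lists Π of {1,…,n} (n ≥ 0) can be written in exactly one way as Π = Π_1 ⊎ Π_2 ⊎ ⋯ ⊎ Π_k, where k ≥ 0, each Π_i is an indivisible set partition into lists of some {1,…,n_i} with n_i ≥ 1, and n_1 + ⋯ + n_k = n. -/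
/-- A set partition into lists of `{1,…,n}`: a finite set of nonempty lists of
distinct positive integers, with all entries across all lists distinct, whose
set of entries is exactly `{1,…,n}`. -/
def IsListPartitionOf (n : ℕ) (P : Finset (List ℕ)) : Prop :=
  (∀ l ∈ P, l ≠ []) ∧
  (∀ l ∈ P, l.Nodup) ∧
  (∀ l ∈ P, ∀ l' ∈ P, l ≠ l' → ∀ x ∈ l, x ∉ l') ∧
  P.sup (fun l => l.toFinset) = Finset.Icc 1 n

/-- The lists of `P` with every entry increased by `n`. -/
def shiftLists (n : ℕ) (P : Finset (List ℕ)) : Finset (List ℕ) :=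
  P.image fun l => l.map (· + n)

/-- The shifted union `P ⊎ P'`, where `P` is a set partition into lists of
`{1,…,n}`. -/
def shiftedUnionL (n : ℕ) (P P' : Finset (List ℕ)) : Finset (List ℕ) :=
  P ∪ shiftLists n P'

/-- A set partition into lists `P` of `{1,…,n}`, `n ≥ 1`, is indivisible if
whenever `P = P' ⊎ P''` with `P'` a set partition into lists of `{1,…,n'}` and
`P''` one of `{1,…,n''}`, `n' + n'' = n`, one has `n' = 0` or `n'' = 0`. -/
def IndivisibleL (n : ℕ) (P : Finset (List ℕ)) : Prop :=
  1 ≤ n ∧ IsListPartitionOf n P ∧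
  ∀ n' n'' (P' P'' : Finset (List ℕ)),
    IsListPartitionOf n' P' → IsListPartitionOf n'' P'' → n' + n'' = n →
    P = shiftedUnionL n' P' P'' → n' = 0 ∨ n'' = 0

/-- Iterated shifted union `P_1 ⊎ P_2 ⊎ ⋯ ⊎ P_k` of a list of pairs
`(n_i, P_i)` where `P_i` is a set partition into lists of `{1,…,n_i}`. -/
def concatPartsL : List (ℕ × Finset (List ℕ)) → Finset (List ℕ)
  | [] => ∅
  | (m, P) :: rest => shiftedUnionL m P (concatPartsL rest)

/-! The blocks of a factorization are forced: `P` splits as `P' ⊎ P''` with `P'` on `{1,…,m}`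
exactly when every list of `P` lies entirely in `{1,…,m}` or entirely above `m`. So `P` is
indivisible iff no `0 < m < n` is such a break point, the first block of any factorization into
indivisibles is cut at the least positive break point, and induction on what remains gives both
existence and uniqueness. -/

lemma mem_shiftedUnionL {a : ℕ} {P Q : Finset (List ℕ)} {l : List ℕ} :
    l ∈ shiftedUnionL a P Q ↔ l ∈ P ∨ ∃ u ∈ Q, u.map (· + a) = l := by
  simp [shiftedUnionL, shiftLists]

lemma map_sub_map_add (a : ℕ) (l : List ℕ) : (l.map (· + a)).map (· - a) = l := by
  simp [Function.comp_def]

lemma map_add_map_sub {a : ℕ} {l : List ℕ} (h : ∀ x ∈ l, a < x) :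
    (l.map (· - a)).map (· + a) = l := by
  rw [List.map_map]
  exact (List.map_congr_left fun x hx => by have := h x hx; simp; omega).trans l.map_id

namespace IsListPartitionOf

variable {n : ℕ} {P : Finset (List ℕ)} {l : List ℕ} {x : ℕ}

lemma mem_Icc (hP : IsListPartitionOf n P) (hl : l ∈ P) (hx : x ∈ l) : 1 ≤ x ∧ x ≤ n := by
  rw [← Finset.mem_Icc, ← hP.2.2.2]
  exact Finset.mem_sup.2 ⟨l, hl, List.mem_toFinset.2 hx⟩

lemma exists_mem (hP : IsListPartitionOf n P) (h1 : 1 ≤ x) (hn : x ≤ n) : ∃ l ∈ P, x ∈ l := by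
  have hx : x ∈ P.sup (fun l => l.toFinset) := by rw [hP.2.2.2]; exact Finset.mem_Icc.2 ⟨h1, hn⟩
  simpa using Finset.mem_sup.1 hx

lemma eq_empty_of_zero (hP : IsListPartitionOf 0 P) : P = ∅ :=
  Finset.eq_empty_of_forall_notMem fun l hl => by
    obtain ⟨x, hx⟩ := List.exists_mem_of_ne_nil l (hP.1 l hl)
    have := hP.mem_Icc hl hx
    omega

lemma nonempty (hP : IsListPartitionOf n P) (hn : 1 ≤ n) : P.Nonempty :=
  let ⟨l, hl, _⟩ := hP.exists_mem le_rfl hn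
  ⟨l, hl⟩

end IsListPartitionOf

lemma sup_toFinset_shiftedUnionL {a b : ℕ} {P Q : Finset (List ℕ)}
    (hP : IsListPartitionOf a P) (hQ : IsListPartitionOf b Q) :
    (shiftedUnionL a P Q).sup (fun l => l.toFinset) = Finset.Icc 1 (a + b) := by
  ext x
  simp only [Finset.mem_sup, List.mem_toFinset, Finset.mem_Icc]
  constructor
  · rintro ⟨l, hl, hx⟩
    rcases mem_shiftedUnionL.1 hl with hl | ⟨u, hu, rfl⟩
    · have := hP.mem_Icc hl hx
      omega
    · obtain ⟨y, hy, rfl⟩ := List.mem_map.1 hx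
      have := hQ.mem_Icc hu hy
      omega
  · rintro ⟨h1, h2⟩
    by_cases hxa : x ≤ a
    · obtain ⟨l, hl, hx⟩ := hP.exists_mem h1 hxa
      exact ⟨l, mem_shiftedUnionL.2 (Or.inl hl), hx⟩
    · obtain ⟨u, hu, hy⟩ := hQ.exists_mem (x := x - a) (by omega) (by omega)
      exact ⟨u.map (· + a), mem_shiftedUnionL.2 (Or.inr ⟨u, hu, rfl⟩),
        List.mem_map.2 ⟨x - a, hy, by omega⟩⟩

lemma IsListPartitionOf.shiftedUnionL {a b : ℕ} {P Q : Finset (List ℕ)}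
    (hP : IsListPartitionOf a P) (hQ : IsListPartitionOf b Q) :
    IsListPartitionOf (a + b) (shiftedUnionL a P Q) := by
  refine ⟨?_, ?_, ?_, sup_toFinset_shiftedUnionL hP hQ⟩
  · intro l hl
    rcases mem_shiftedUnionL.1 hl with hl | ⟨u, hu, rfl⟩
    · exact hP.1 l hl
    · simpa using hQ.1 u hu
  · intro l hl
    rcases mem_shiftedUnionL.1 hl with hl | ⟨u, hu, rfl⟩
    · exact hP.2.1 l hl
    · exact (hQ.2.1 u hu).map (add_left_injective a)
  · intro l hl l' hl' hne x hx hx'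
    rcases mem_shiftedUnionL.1 hl with hl | ⟨u, hu, rfl⟩ <;>
      rcases mem_shiftedUnionL.1 hl' with hl' | ⟨v, hv, rfl⟩
    · exact hP.2.2.1 l hl l' hl' hne x hx hx'
    · obtain ⟨y, hy, rfl⟩ := List.mem_map.1 hx'
      have := hP.mem_Icc hl hx
      have := hQ.mem_Icc hv hy
      omega
    · obtain ⟨y, hy, rfl⟩ := List.mem_map.1 hx
      have := hP.mem_Icc hl' hx'
      have := hQ.mem_Icc hu hy
      omega
    · obtain ⟨y, hy, rfl⟩ := List.mem_map.1 hx
      obtain ⟨z, hz, hzy⟩ := List.mem_map.1 hx'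
      obtain rfl : z = y := by omega
      exact hQ.2.2.1 u hu v hv (by rintro rfl; exact hne rfl) z hy hz

lemma IsListPartitionOf.concatPartsL :
    ∀ {L : List (ℕ × Finset (List ℕ))}, (∀ p ∈ L, IsListPartitionOf p.1 p.2) →
      IsListPartitionOf (L.map Prod.fst).sum (concatPartsL L)
  | [], _ => by simp [IsListPartitionOf, _root_.concatPartsL]
  | (m, Q) :: rest, h => by
    simpa [_root_.concatPartsL] using (h (m, Q) (by simp)).shiftedUnionL
      (IsListPartitionOf.concatPartsL fun p hp => h p (List.mem_cons_of_mem _ hp))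

def IsBreak (m : ℕ) (P : Finset (List ℕ)) : Prop :=
  ∀ l ∈ P, (∀ x ∈ l, x ≤ m) ∨ (∀ x ∈ l, m < x)

def lowerPart (m : ℕ) (P : Finset (List ℕ)) : Finset (List ℕ) :=
  P.filter fun l => ∀ x ∈ l, x ≤ m

def upperPart (m : ℕ) (P : Finset (List ℕ)) : Finset (List ℕ) :=
  (P.filter fun l => ∀ x ∈ l, m < x).image fun l => l.map (· - m)

lemma mem_lowerPart {m : ℕ} {P : Finset (List ℕ)} {l : List ℕ} :
    l ∈ lowerPart m P ↔ l ∈ P ∧ ∀ x ∈ l, x ≤ m :=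
  Finset.mem_filter

lemma mem_upperPart {m : ℕ} {P : Finset (List ℕ)} {l : List ℕ} :
    l ∈ upperPart m P ↔ ∃ u ∈ P, (∀ x ∈ u, m < x) ∧ u.map (· - m) = l := by
  simp [upperPart, and_assoc]

lemma IsBreak.mono {m : ℕ} {P Q : Finset (List ℕ)} (hQP : Q ⊆ P) (h : IsBreak m P) :
    IsBreak m Q :=
  fun l hl => h l (hQP hl)

lemma IsBreak.of_lowerPart {m k : ℕ} {P : Finset (List ℕ)} (hm : IsBreak m P) (hkm : k ≤ m)
    (hk : IsBreak k (lowerPart m P)) : IsBreak k P := by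
  intro l hl
  rcases hm l hl with hle | hlt
  · exact hk l (mem_lowerPart.2 ⟨hl, hle⟩)
  · exact Or.inr fun x hx => hkm.trans_lt (hlt x hx)

lemma shiftedUnionL_lowerPart_upperPart {m : ℕ} {P : Finset (List ℕ)} (h : IsBreak m P) :
    shiftedUnionL m (lowerPart m P) (upperPart m P) = P := by
  ext l
  simp only [mem_shiftedUnionL, mem_lowerPart, mem_upperPart]
  constructor
  · rintro (⟨hl, -⟩ | ⟨-, ⟨u, hu, hum, rfl⟩, rfl⟩)
    · exact hl
    · rwa [map_add_map_sub hum]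
  · intro hl
    rcases h l hl with hle | hlt
    · exact Or.inl ⟨hl, hle⟩
    · exact Or.inr ⟨_, ⟨l, hl, hlt, rfl⟩, map_add_map_sub hlt⟩

lemma sup_toFinset_upperPart {n m : ℕ} {P : Finset (List ℕ)} (hP : IsListPartitionOf n P)
    (h : IsBreak m P) : (upperPart m P).sup (fun l => l.toFinset) = Finset.Icc 1 (n - m) := by
  ext x
  simp only [Finset.mem_sup, List.mem_toFinset, Finset.mem_Icc, mem_upperPart]
  constructor
  · rintro ⟨l, ⟨u, hu, hum, rfl⟩, hx⟩
    obtain ⟨y, hy, rfl⟩ := List.mem_map.1 hx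
    have := hum y hy
    have := hP.mem_Icc hu hy
    omega
  · rintro ⟨h1, h2⟩
    obtain ⟨u, hu, hx⟩ := hP.exists_mem (x := x + m) (by omega) (by omega)
    have hum : ∀ y ∈ u, m < y :=
      (h u hu).resolve_left fun hle => by have := hle _ hx; omega
    exact ⟨_, ⟨u, hu, hum, rfl⟩, List.mem_map.2 ⟨x + m, hx, by omega⟩⟩

namespace IsListPartitionOf

variable {n m : ℕ} {P : Finset (List ℕ)}

lemma lowerPart (hP : IsListPartitionOf n P) (h : IsBreak m P) (hm : m ≤ n) :
    IsListPartitionOf m (lowerPart m P) := by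
  have hsub : _root_.lowerPart m P ⊆ P := Finset.filter_subset _ _
  refine ⟨fun l hl => hP.1 l (hsub hl), fun l hl => hP.2.1 l (hsub hl),
    fun l hl l' hl' => hP.2.2.1 l (hsub hl) l' (hsub hl'), ?_⟩
  ext x
  simp only [Finset.mem_sup, List.mem_toFinset, Finset.mem_Icc, mem_lowerPart]
  constructor
  · rintro ⟨l, ⟨hl, hle⟩, hx⟩
    exact ⟨(hP.mem_Icc hl hx).1, hle x hx⟩
  · rintro ⟨h1, h2⟩
    obtain ⟨l, hl, hx⟩ := hP.exists_mem h1 (h2.trans hm)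
    refine ⟨l, ⟨hl, (h l hl).resolve_right fun hlt => ?_⟩, hx⟩
    exact absurd (hlt x hx) h2.not_gt

lemma upperPart (hP : IsListPartitionOf n P) (h : IsBreak m P) :
    IsListPartitionOf (n - m) (upperPart m P) := by
  refine ⟨?_, ?_, ?_, sup_toFinset_upperPart hP h⟩
  · intro l hl
    obtain ⟨u, hu, -, rfl⟩ := mem_upperPart.1 hl
    simpa using hP.1 u hu
  · intro l hl
    obtain ⟨u, hu, hum, rfl⟩ := mem_upperPart.1 hl
    refine (hP.2.1 u hu).map_on fun x hx y hy hxy => ?_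
    have := hum x hx
    have := hum y hy
    omega
  · intro l hl l' hl' hne x hx hx'
    obtain ⟨u, hu, hum, rfl⟩ := mem_upperPart.1 hl
    obtain ⟨v, hv, hvm, rfl⟩ := mem_upperPart.1 hl'
    obtain ⟨y, hy, rfl⟩ := List.mem_map.1 hx
    obtain ⟨z, hz, hzy⟩ := List.mem_map.1 hx'
    have := hum y hy
    have := hvm z hz
    obtain rfl : z = y := by omega
    exact hP.2.2.1 u hu v hv (by rintro rfl; exact hne rfl) z hy hz

end IsListPartitionOf

section ShiftedUnion

variable {a b : ℕ} {P Q : Finset (List ℕ)}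

lemma isBreak_shiftedUnionL (hP : IsListPartitionOf a P) (hQ : IsListPartitionOf b Q) :
    IsBreak a (shiftedUnionL a P Q) := by
  intro l hl
  rcases mem_shiftedUnionL.1 hl with hl | ⟨u, hu, rfl⟩
  · exact Or.inl fun x hx => (hP.mem_Icc hl hx).2
  · refine Or.inr fun x hx => ?_
    obtain ⟨y, hy, rfl⟩ := List.mem_map.1 hx
    have := (hQ.mem_Icc hu hy).1
    omega

lemma lowerPart_shiftedUnionL (hP : IsListPartitionOf a P) (hQ : IsListPartitionOf b Q) :
    lowerPart a (shiftedUnionL a P Q) = P := by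
  ext l
  simp only [mem_lowerPart, mem_shiftedUnionL]
  constructor
  · rintro ⟨hl | ⟨u, hu, rfl⟩, hle⟩
    · exact hl
    · obtain ⟨y, hy⟩ := List.exists_mem_of_ne_nil u (hQ.1 u hu)
      have := hle (y + a) (List.mem_map_of_mem hy)
      have := (hQ.mem_Icc hu hy).1
      omega
  · intro hl
    exact ⟨Or.inl hl, fun x hx => (hP.mem_Icc hl hx).2⟩

lemma upperPart_shiftedUnionL (hP : IsListPartitionOf a P) (hQ : IsListPartitionOf b Q) :
    upperPart a (shiftedUnionL a P Q) = Q := by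
  ext l
  simp only [mem_upperPart, mem_shiftedUnionL]
  constructor
  · rintro ⟨u, hu | ⟨v, hv, rfl⟩, hua, rfl⟩
    · obtain ⟨x, hx⟩ := List.exists_mem_of_ne_nil u (hP.1 u hu)
      exact absurd (hua x hx) (hP.mem_Icc hu hx).2.not_gt
    · rwa [map_sub_map_add]
  · intro hl
    refine ⟨_, Or.inr ⟨l, hl, rfl⟩, fun x hx => ?_, map_sub_map_add a l⟩
    obtain ⟨y, hy, rfl⟩ := List.mem_map.1 hx
    have := (hQ.mem_Icc hl hy).1
    omega

end ShiftedUnion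

lemma indivisibleL_iff {n : ℕ} {P : Finset (List ℕ)} (hn : 1 ≤ n) (hP : IsListPartitionOf n P) :
    IndivisibleL n P ↔ ∀ m, 0 < m → m < n → ¬ IsBreak m P := by
  constructor
  · rintro ⟨-, -, hind⟩ m hm hmn hbr
    have := hind m (n - m) _ _ (hP.lowerPart hbr hmn.le) (hP.upperPart hbr) (by omega)
      (shiftedUnionL_lowerPart_upperPart hbr).symm
    omega
  · intro h
    refine ⟨hn, hP, fun a b P' P'' h' h'' hab hsplit => ?_⟩
    by_contra! hab0
    exact h a (by omega) (by omega) (hsplit ▸ isBreak_shiftedUnionL h' h'')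

lemma IsListPartitionOf.isBreak_self {n : ℕ} {P : Finset (List ℕ)} (hP : IsListPartitionOf n P) :
    IsBreak n P :=
  fun _ hl => Or.inl fun _ hx => (hP.mem_Icc hl hx).2

lemma IndivisibleL.le_of_isBreak {a k : ℕ} {P Q : Finset (List ℕ)} (hQ : IndivisibleL a Q)
    (hQP : Q ⊆ P) (hk : IsBreak k P) (hk0 : 0 < k) : a ≤ k := by
  by_contra! hka
  exact (indivisibleL_iff hQ.1 hQ.2.1).1 hQ k hk0 hka (hk.mono hQP)

lemma indivisibleL_lowerPart {n m : ℕ} {P : Finset (List ℕ)} (hP : IsListPartitionOf n P)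
    (hmn : m ≤ n) (hm : IsLeast {k | 0 < k ∧ IsBreak k P} m) :
    IndivisibleL m (lowerPart m P) :=
  (indivisibleL_iff hm.1.1 (hP.lowerPart hm.1.2 hmn)).2 fun _ hk0 hkm hk =>
    hkm.not_ge (hm.2 ⟨hk0, hm.1.2.of_lowerPart hkm.le hk⟩)

lemma IndivisibleL.concatPartsL_cons_ne_empty {a : ℕ} {Q : Finset (List ℕ)}
    (hQ : IndivisibleL a Q) (L : List (ℕ × Finset (List ℕ))) :
    concatPartsL ((a, Q) :: L) ≠ ∅ :=
  ((hQ.2.1.nonempty hQ.1).mono Finset.subset_union_left).ne_empty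

theorem exists_indivisible_factorization (n : ℕ) :
    ∀ {P : Finset (List ℕ)}, IsListPartitionOf n P →
      ∃ L : List (ℕ × Finset (List ℕ)), (∀ p ∈ L, IndivisibleL p.1 p.2) ∧
        (L.map Prod.fst).sum = n ∧ concatPartsL L = P := by
  induction n using Nat.strong_induction_on with
  | _ n ih =>
  intro P hP
  rcases Nat.eq_zero_or_pos n with rfl | hn
  · exact ⟨[], by simp, rfl, by simp [concatPartsL, hP.eq_empty_of_zero]⟩
  classical
  have hex : ∃ m, 0 < m ∧ IsBreak m P := ⟨n, hn, hP.isBreak_self⟩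
  set m := Nat.find hex
  have hm : IsLeast {k | 0 < k ∧ IsBreak k P} m := Nat.isLeast_find hex
  have hmn : m ≤ n := hm.2 ⟨hn, hP.isBreak_self⟩
  obtain ⟨L, hL, hsum, hcat⟩ := ih (n - m) (Nat.sub_lt hn hm.1.1) (hP.upperPart hm.1.2)
  refine ⟨(m, lowerPart m P) :: L, List.forall_mem_cons.2 ⟨indivisibleL_lowerPart hP hmn hm, hL⟩,
    ?_, ?_⟩
  · simp only [List.map_cons, List.sum_cons, hsum]
    omega
  · rw [concatPartsL, hcat, shiftedUnionL_lowerPart_upperPart hm.1.2]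

theorem eq_of_concatPartsL_eq :
    ∀ {L L' : List (ℕ × Finset (List ℕ))}, (∀ p ∈ L, IndivisibleL p.1 p.2) →
      (∀ p ∈ L', IndivisibleL p.1 p.2) → concatPartsL L = concatPartsL L' → L = L'
  | [], [], _, _, _ => rfl
  | [], (_, _) :: _, _, h', hcat =>
    ((List.forall_mem_cons.1 h').1.concatPartsL_cons_ne_empty _ hcat.symm).elim
  | (_, _) :: _, [], h, _, hcat =>
    ((List.forall_mem_cons.1 h).1.concatPartsL_cons_ne_empty _ hcat).elim
  | (a, Q) :: L, (b, R) :: L', h, h', hcat => by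
    simp only [List.forall_mem_cons] at h h'
    obtain ⟨hQ, hL⟩ := h
    obtain ⟨hR, hL'⟩ := h'
    have hPL := IsListPartitionOf.concatPartsL fun p hp => (hL p hp).2.1
    have hPL' := IsListPartitionOf.concatPartsL fun p hp => (hL' p hp).2.1
    change shiftedUnionL a Q (concatPartsL L) = shiftedUnionL b R (concatPartsL L') at hcat
    -- both `a` and `b` are the least positive break point of the common union
    obtain rfl : a = b := le_antisymm
      (hQ.le_of_isBreak Finset.subset_union_left (hcat ▸ isBreak_shiftedUnionL hR.2.1 hPL') hR.1)
      (hR.le_of_isBreak Finset.subset_union_left (hcat ▸ isBreak_shiftedUnionL hQ.2.1 hPL) hQ.1)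
    have hQR : Q = R := by
      rw [← lowerPart_shiftedUnionL hQ.2.1 hPL, hcat, lowerPart_shiftedUnionL hR.2.1 hPL']
    have hLL' : concatPartsL L = concatPartsL L' := by
      rw [← upperPart_shiftedUnionL hQ.2.1 hPL, hcat, upperPart_shiftedUnionL hR.2.1 hPL']
    rw [hQR, eq_of_concatPartsL_eq hL hL' hLL']

/-- Unique factorization of set partitions into lists into indivisible ones
(freeness of `BWSym`): every set partition into lists of `{1,…,n}` can be
written in exactly one way as `P_1 ⊎ ⋯ ⊎ P_k` with each `P_i` an indivisible
set partition into lists of `{1,…,n_i}`, `n_i ≥ 1`, `n_1 + ⋯ + n_k = n`. -/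
theorem unique_factorization_list_partitions (n : ℕ) (P : Finset (List ℕ))
    (hP : IsListPartitionOf n P) :
    ∃! L : List (ℕ × Finset (List ℕ)),
      (∀ p ∈ L, IndivisibleL p.1 p.2) ∧
      (L.map Prod.fst).sum = n ∧
      concatPartsL L = P := by
  obtain ⟨L, hL⟩ := exists_indivisible_factorization n hP
  exact ⟨L, hL, fun L' hL' => eq_of_concatPartsL_eq hL'.1 hL.1 (hL'.2.2.trans hL.2.2.symm)⟩
end
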